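/- For all integers n ≥ 6 and γ ≥ 0 one has F(1/√(2n(n+1)), n, γ) > F₅(γ). -/

import Mathlib

open Real

def d (n γ : ℤ) : ℤ := ⌈(n : ℚ) * (γ : ℚ) / ((n : ℚ) + 1)⌉ + n

noncomputable def δ (n γ : ℤ) : ℝ := 1 + ((γ : ℝ) - 1) / ((d n γ : ℤ) : ℝ)

noncomputable def F (a : ℝ) (n γ : ℤ) : ℝ :=
  8 * π * ((d n γ : ℤ) : ℝ) *
    (1 + (2 * a ^ 2 * δ n γ - ((n : ℝ) - 1) / ((n : ℝ) + 1)) /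
      ((2 * a - 1) ^ 2 + ((n : ℝ) - 1) / ((n : ℝ) + 1)))

noncomputable def F₅ (γ : ℤ) : ℝ := F (1 / Real.sqrt 60) 5 γ

noncomputable def ξ (n γ : ℤ) : ℝ := (n : ℝ) * δ n γ + ((n : ℝ) - 1)

noncomputable def aMin (n γ : ℤ) : ℝ :=
  (ξ n γ - Real.sqrt (ξ n γ ^ 2 - 2 * ((n : ℝ) ^ 2 - 1) * δ n γ)) /
    (2 * δ n γ * ((n : ℝ) + 1))

noncomputable def aMax (n γ : ℤ) : ℝ :=
  (ξ n γ + Real.sqrt (ξ n γ ^ 2 - 2 * ((n : ℝ) ^ 2 - 1) * δ n γ)) /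
    (2 * δ n γ * ((n : ℝ) + 1))

lemma d_ge_n (n γ : ℤ) (hn : 1 ≤ n) (hγ : 0 ≤ γ) : n ≤ d n γ := by
  have h0 : (0:ℚ) ≤ (n : ℚ) * (γ : ℚ) / ((n : ℚ) + 1) := by
    apply div_nonneg
    · have h1 : (0:ℚ) ≤ (n:ℚ) := by exact_mod_cast (by linarith : (0:ℤ) ≤ n)
      have h2 : (0:ℚ) ≤ (γ:ℚ) := by exact_mod_cast hγ
      positivity
    · have h1 : (1:ℚ) ≤ (n:ℚ) := by exact_mod_cast hn
      linarith
  have := Int.ceil_nonneg h0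
  unfold d; omega

lemma d_lb (n γ : ℤ) : (n:ℝ) * (γ:ℝ) / ((n:ℝ) + 1) + (n:ℝ) ≤ ((d n γ : ℤ) : ℝ) := by
  have h := Int.le_ceil ((n : ℚ) * (γ : ℚ) / ((n : ℚ) + 1))
  have h2 : ((((n : ℚ) * (γ : ℚ) / ((n : ℚ) + 1)) : ℚ) : ℝ) ≤ ((⌈(n : ℚ) * (γ : ℚ) / ((n : ℚ) + 1)⌉ : ℤ) : ℝ) := by
    exact_mod_cast h
  unfold d
  push_cast at h2 ⊢
  linarith

lemma d_ub (n γ : ℤ) : ((d n γ : ℤ) : ℝ) < (n:ℝ) * (γ:ℝ) / ((n:ℝ) + 1) + (n:ℝ) + 1 := by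
  have h := Int.ceil_lt_add_one ((n : ℚ) * (γ : ℚ) / ((n : ℚ) + 1))
  have h2 : ((⌈(n : ℚ) * (γ : ℚ) / ((n : ℚ) + 1)⌉ : ℤ) : ℝ) < (((n : ℚ) * (γ : ℚ) / ((n : ℚ) + 1) + 1 : ℚ) : ℝ) := by
    exact_mod_cast h
  unfold d
  push_cast at h2 ⊢
  linarith

lemma F_eq (n γ : ℤ) (hn : 2 ≤ n) (hγ : 0 ≤ γ) :
    F (1 / Real.sqrt (2 * (n:ℝ) * ((n:ℝ)+1))) n γ =
      2 * π * (((d n γ : ℤ) : ℝ) * (2*(n:ℝ)^2 + 2*(n:ℝ) + 6 - 4 * Real.sqrt (2*(n:ℝ)*((n:ℝ)+1))) + 2*(γ:ℝ) - 2) /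
        ((n:ℝ)^2 + 1 - Real.sqrt (2*(n:ℝ)*((n:ℝ)+1))) := by
  unfold F δ
  set x : ℝ := (n:ℝ) with hxdef
  have hx2 : (2:ℝ) ≤ x := by rw [hxdef]; exact_mod_cast hn
  set m : ℝ := Real.sqrt (2*x*(x+1)) with hmdef
  have hm2 : m^2 = 2*x*(x+1) := Real.sq_sqrt (by nlinarith)
  have hm0 : 0 < m := Real.sqrt_pos.mpr (by nlinarith)
  have hmlt : m < x^2 + 1 := by
    rw [hmdef, Real.sqrt_lt' (by nlinarith)]; nlinarith [sq_nonneg (x^2-1)]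
  have hdn : n ≤ d n γ := d_ge_n n γ (by linarith) hγ
  have hd : (0:ℝ) < ((d n γ : ℤ) : ℝ) := by
    have : (n:ℝ) ≤ ((d n γ : ℤ) : ℝ) := by exact_mod_cast hdn
    linarith
  have hx1 : (0:ℝ) < x + 1 := by linarith
  have hD : (2 * (1/m) - 1)^2 + (x-1)/(x+1) = (4*x^2 + 4 - 4*m)/m^2 := by
    field_simp
    ring_nf
    linear_combination (2*x) * hm2
  have hN : 2 * (1/m)^2 * (1 + ((γ:ℝ) - 1) / ((d n γ : ℤ) : ℝ)) - (x-1)/(x+1)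
      = (2 * (1 + ((γ:ℝ) - 1) / ((d n γ : ℤ) : ℝ)) - 2*x*(x-1))/m^2 := by
    field_simp
    ring_nf
    linear_combination ((d n γ : ℤ) : ℝ) * (1-x) * hm2
  rw [hD, hN]
  have hP : (0:ℝ) < 4*x^2 + 4 - 4*m := by nlinarith
  have hQ : (0:ℝ) < x^2 + 1 - m := by nlinarith
  field_simp
  ring

lemma F5_eq (γ : ℤ) (hγ : 0 ≤ γ) :
    F₅ γ = 2 * π * (((d 5 γ : ℤ) : ℝ) * (66 - 4 * Real.sqrt 60) + 2*(γ:ℝ) - 2) / (26 - Real.sqrt 60) := by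
  have e := F_eq 5 γ (by norm_num) hγ
  norm_num at e
  unfold F₅
  rw [one_div]
  exact e


set_option maxHeartbeats 1000000 in
lemma key_ineq (x g m s Dn D5 : ℝ) (hx : 6 ≤ x) (hg : 0 ≤ g)
    (hml : 1.41*x + 0.7 ≤ m) (hmu : m ≤ 1.415*x + 0.71)
    (hsl : 7.74596 ≤ s) (hsu : s ≤ 7.74597)
    (e1 : x*g + x*(x+1) ≤ Dn*(x+1))
    (hdu : D5 < 5*g/6 + 6) :
    (D5*(66-4*s) + 2*g - 2)*(x^2+1-m) < (Dn*(2*x^2+2*x+6-4*m) + 2*g - 2)*(26-s) := by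
  have hx1 : (0:ℝ) < x + 1 := by linarith
  have hQ : (0:ℝ) < x^2 + 1 - m := by nlinarith
  have hQ5 : (0:ℝ) < 26 - s := by linarith
  have hc : (0:ℝ) < 2*x^2 + 2*x + 6 - 4*m := by nlinarith
  have hc5 : (0:ℝ) < 66 - 4*s := by linarith
  have hS : 0 ≤ (26-s)*(6*x*(2*x^2+2*x+6-4*m)+12*x+12) - (x^2+1-m)*(x+1)*(342-20*s) := by
    nlinarith [mul_nonneg (sub_nonneg.2 hml) (sub_nonneg.2 hsl), mul_nonneg (sub_nonneg.2 hmu) (sub_nonneg.2 hsu),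
      mul_nonneg (sub_nonneg.2 hml) (sub_nonneg.2 hsu), mul_nonneg (sub_nonneg.2 hmu) (sub_nonneg.2 hsl),
      mul_nonneg (sub_nonneg.2 hx) (sub_nonneg.2 hml), mul_nonneg (sub_nonneg.2 hx) (sub_nonneg.2 hmu),
      mul_nonneg (sub_nonneg.2 hx) (sub_nonneg.2 hsl), mul_nonneg (sub_nonneg.2 hx) (sub_nonneg.2 hsu),
      sq_nonneg (x-6), mul_nonneg (mul_nonneg (sub_nonneg.2 hx) (sub_nonneg.2 hx)) (sub_nonneg.2 hx),
      mul_nonneg (mul_nonneg (sub_nonneg.2 hx) (sub_nonneg.2 hx)) (sub_nonneg.2 hsl),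
      mul_nonneg (mul_nonneg (sub_nonneg.2 hx) (sub_nonneg.2 hx)) (sub_nonneg.2 hmu),
      mul_nonneg (mul_nonneg (sub_nonneg.2 hx) (sub_nonneg.2 hx)) (sub_nonneg.2 hml)]
  have hI : 0 < (26-s)*(x*(2*x^2+2*x+6-4*m)-2) - (x^2+1-m)*(394-24*s) := by
    nlinarith [mul_nonneg (sub_nonneg.2 hml) (sub_nonneg.2 hsl), mul_nonneg (sub_nonneg.2 hmu) (sub_nonneg.2 hsu),
      mul_nonneg (sub_nonneg.2 hml) (sub_nonneg.2 hsu), mul_nonneg (sub_nonneg.2 hmu) (sub_nonneg.2 hsl),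
      mul_nonneg (sub_nonneg.2 hx) (sub_nonneg.2 hml), mul_nonneg (sub_nonneg.2 hx) (sub_nonneg.2 hmu),
      mul_nonneg (sub_nonneg.2 hx) (sub_nonneg.2 hsl), mul_nonneg (sub_nonneg.2 hx) (sub_nonneg.2 hsu),
      sq_nonneg (x-6), mul_nonneg (mul_nonneg (sub_nonneg.2 hx) (sub_nonneg.2 hx)) (sub_nonneg.2 hx),
      mul_nonneg (mul_nonneg (sub_nonneg.2 hx) (sub_nonneg.2 hx)) (sub_nonneg.2 hsl),
      mul_nonneg (mul_nonneg (sub_nonneg.2 hx) (sub_nonneg.2 hx)) (sub_nonneg.2 hmu),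
      mul_nonneg (mul_nonneg (sub_nonneg.2 hx) (sub_nonneg.2 hx)) (sub_nonneg.2 hml)]
  have hU : D5 * (66 - 4*s) + 2*g - 2 < (5*g/6+6)*(66-4*s) + 2*g - 2 := by
    linarith [mul_lt_mul_of_pos_right hdu hc5]
  have hstep2 : (x*g + x*(x+1))*(2*x^2+2*x+6-4*m) + (2*g-2)*(x+1)
      ≤ (Dn*(2*x^2+2*x+6-4*m) + 2*g - 2)*(x+1) := by
    linarith [mul_le_mul_of_nonneg_right e1 hc.le]
  have hfinal6 : ((5*g/6+6)*(66-4*s) + 2*g - 2)*(x^2+1-m)*(6*(x+1))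
      ≤ ((Dn*(2*x^2+2*x+6-4*m) + 2*g - 2)*(26-s))*(6*(x+1)) := by
    linarith [mul_nonneg hg hS, mul_pos (by linarith : (0:ℝ) < 6*(x+1)) hI,
      mul_le_mul_of_nonneg_left hstep2 (by linarith : (0:ℝ) ≤ 6*(26-s))]
  have h1 := mul_lt_mul_of_pos_right hU hQ
  have h2 : ((5*g/6+6)*(66-4*s) + 2*g - 2)*(x^2+1-m)
      ≤ (Dn*(2*x^2+2*x+6-4*m) + 2*g - 2)*(26-s) :=
    le_of_mul_le_mul_right (by linarith [hfinal6]) (by linarith : (0:ℝ) < 6*(x+1))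
  linarith
theorem stmt_12 (n γ : ℤ) (hn : 6 ≤ n) (hγ : 0 ≤ γ) :
    F (1 / Real.sqrt (2 * (n : ℝ) * ((n : ℝ) + 1))) n γ > F₅ γ := by
  rw [F_eq n γ (by linarith) hγ, F5_eq γ hγ]
  have hx : (6:ℝ) ≤ (n:ℝ) := by exact_mod_cast hn
  have hg : (0:ℝ) ≤ (γ:ℝ) := by exact_mod_cast hγ
  have hx1 : (0:ℝ) < (n:ℝ) + 1 := by linarith
  have hsu : Real.sqrt 60 ≤ 7.74597 :=
    le_of_lt ((Real.sqrt_lt' (by norm_num : (0:ℝ) < 7.74597)).2 (by norm_num : (60:ℝ) < 7.74597^2))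
  have hsl : (7.74596:ℝ) ≤ Real.sqrt 60 :=
    le_of_lt ((Real.lt_sqrt (by norm_num : (0:ℝ) ≤ 7.74596)).2 (by norm_num : (7.74596:ℝ)^2 < 60))
  have hmu : Real.sqrt (2*(n:ℝ)*((n:ℝ)+1)) ≤ 1.415*(n:ℝ) + 0.71 :=
    le_of_lt ((Real.sqrt_lt' (by linarith : (0:ℝ) < 1.415*(n:ℝ) + 0.71)).2
      (by nlinarith : 2*(n:ℝ)*((n:ℝ)+1) < (1.415*(n:ℝ)+0.71)^2))
  have hml : (1.41:ℝ)*(n:ℝ) + 0.7 ≤ Real.sqrt (2*(n:ℝ)*((n:ℝ)+1)) :=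
    le_of_lt ((Real.lt_sqrt (by linarith : (0:ℝ) ≤ 1.41*(n:ℝ) + 0.7)).2
      (by nlinarith : (1.41*(n:ℝ)+0.7)^2 < 2*(n:ℝ)*((n:ℝ)+1)))
  have hdu : ((d 5 γ : ℤ) : ℝ) < 5*(γ:ℝ)/6 + 6 := by
    have h := d_ub 5 γ
    norm_num at h
    linarith
  have e1 : (n:ℝ)*(γ:ℝ) + (n:ℝ)*((n:ℝ)+1) ≤ ((d n γ : ℤ) : ℝ) * ((n:ℝ)+1) := by
    have h := d_lb n γ
    have h2 := mul_le_mul_of_nonneg_right h (le_of_lt hx1)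
    have key : ((n:ℝ)*(γ:ℝ)/((n:ℝ)+1) + (n:ℝ)) * ((n:ℝ)+1) = (n:ℝ)*(γ:ℝ) + (n:ℝ)*((n:ℝ)+1) := by
      field_simp
    rw [key] at h2
    exact h2
  have hmain := key_ineq ((n:ℝ)) ((γ:ℝ)) (Real.sqrt (2*(n:ℝ)*((n:ℝ)+1))) (Real.sqrt 60)
    (((d n γ : ℤ) : ℝ)) (((d 5 γ : ℤ) : ℝ)) hx hg hml hmu hsl hsu e1 hdu
  have hQ : (0:ℝ) < (n:ℝ)^2 + 1 - Real.sqrt (2*(n:ℝ)*((n:ℝ)+1)) := by nlinarith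
  have hQ5 : (0:ℝ) < 26 - Real.sqrt 60 := by linarith
  rw [gt_iff_lt, div_lt_div_iff₀ hQ5 hQ]
  have h2pi : (0:ℝ) < 2*π := by positivity
  linarith [mul_lt_mul_of_pos_left hmain h2pi]
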